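/- arXiv:2404.09612 — 7 statements merged into one kernel-verified Lean document; each statement's English description precedes it below -/
import Mathlib

section
/- Let U, Ũ : ℝ² → ℝ be smooth (continuously differentiable) functions. Then the partial differential equations ∂U/∂q₁ = ∂Ũ/∂q₂ and ∂U/∂q₂ = ∂Ũ/∂q₁ hold identically on ℝ² if and only if there exist smooth functions f, g : ℝ → ℝ such that U(q₁,q₂) = f(q₁+q₂) + g(q₁−q₂) and Ũ(q₁,q₂) = f(q₁+q₂) − g(q₁−q₂) for all (q₁,q₂) ∈ ℝ². -/
private lemma pd1 (h : ℝ × ℝ → ℝ) (hd : Differentiable ℝ h) (x y : ℝ) :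
    deriv (fun s => h (s, y)) x = fderiv ℝ h (x, y) (1, 0) := by
  have hl : HasDerivAt (fun s : ℝ => (s, y)) ((1 : ℝ), (0 : ℝ)) x :=
    (hasDerivAt_id x).prodMk (hasDerivAt_const x y)
  exact ((hd (x, y)).hasFDerivAt.comp_hasDerivAt x hl).deriv

private lemma pd2 (h : ℝ × ℝ → ℝ) (hd : Differentiable ℝ h) (x y : ℝ) :
    deriv (fun s => h (x, s)) y = fderiv ℝ h (x, y) (0, 1) := by
  have hl : HasDerivAt (fun s : ℝ => (x, s)) ((0 : ℝ), (1 : ℝ)) y :=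
    (hasDerivAt_const y x).prodMk (hasDerivAt_id y)
  exact ((hd (x, y)).hasFDerivAt.comp_hasDerivAt y hl).deriv

private lemma const_dir (h : ℝ × ℝ → ℝ) (hd : Differentiable ℝ h) (v : ℝ × ℝ)
    (hv : ∀ p, fderiv ℝ h p v = 0) (p : ℝ × ℝ) (t : ℝ) :
    h (p + t • v) = h p := by
  have key : ∀ s : ℝ, HasDerivAt (fun t : ℝ => h (p + t • v)) 0 s := by
    intro s
    have hl : HasDerivAt (fun t : ℝ => p + t • v) v s := by
      simpa using ((hasDerivAt_id s).smul_const v).const_add p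
    have := (hd (p + s • v)).hasFDerivAt.comp_hasDerivAt s hl
    rw [hv] at this
    exact this
  have hc : ∀ a b : ℝ, h (p + a • v) = h (p + b • v) := fun a b =>
    is_const_of_deriv_eq_zero (fun s => (key s).differentiableAt)
      (fun s => (key s).deriv) a b
  simpa using hc t 0

/-- The Euler–Lagrange equations of `L = ½(q̇₁²+q̇₂²) − U` and `L̃ = q̇₁q̇₂ − Ũ`
coincide (i.e. `∂U/∂q₁ = ∂Ũ/∂q₂` and `∂U/∂q₂ = ∂Ũ/∂q₁` identically) iff the
potentials split as `U = f(q₁+q₂) + g(q₁−q₂)`, `Ũ = f(q₁+q₂) − g(q₁−q₂)`. -/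
theorem stmt_0 (U Ut : ℝ × ℝ → ℝ)
    (hU : ContDiff ℝ (⊤ : ℕ∞) U) (hUt : ContDiff ℝ (⊤ : ℕ∞) Ut) :
    (∀ q₁ q₂ : ℝ,
        deriv (fun s => U (s, q₂)) q₁ = deriv (fun s => Ut (q₁, s)) q₂ ∧
        deriv (fun s => U (q₁, s)) q₂ = deriv (fun s => Ut (s, q₂)) q₁) ↔
      (∃ f g : ℝ → ℝ, ContDiff ℝ (⊤ : ℕ∞) f ∧ ContDiff ℝ (⊤ : ℕ∞) g ∧
        ∀ q₁ q₂ : ℝ,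
          U (q₁, q₂) = f (q₁ + q₂) + g (q₁ - q₂) ∧
          Ut (q₁, q₂) = f (q₁ + q₂) - g (q₁ - q₂)) := by
  have dU : Differentiable ℝ U := hU.differentiable (by simp)
  have dUt : Differentiable ℝ Ut := hUt.differentiable (by simp)
  constructor
  · intro hyp
    -- translate to fderiv
    have h1 : ∀ p : ℝ × ℝ, fderiv ℝ U p (1, 0) = fderiv ℝ Ut p (0, 1) := by
      intro ⟨x, y⟩
      have := (hyp x y).1
      rwa [pd1 U dU, pd2 Ut dUt] at this
    have h2 : ∀ p : ℝ × ℝ, fderiv ℝ U p (0, 1) = fderiv ℝ Ut p (1, 0) := by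
      intro ⟨x, y⟩
      have := (hyp x y).2
      rwa [pd2 U dU, pd1 Ut dUt] at this
    set S : ℝ × ℝ → ℝ := fun p => U p + Ut p with hSdef
    set D : ℝ × ℝ → ℝ := fun p => U p - Ut p with hDdef
    have dS : Differentiable ℝ S := dU.add dUt
    have dD : Differentiable ℝ D := dU.sub dUt
    have fS : ∀ p : ℝ × ℝ, fderiv ℝ S p = fderiv ℝ U p + fderiv ℝ Ut p := fun p =>
      fderiv_add (dU p) (dUt p)
    have fD : ∀ p : ℝ × ℝ, fderiv ℝ D p = fderiv ℝ U p - fderiv ℝ Ut p := fun p =>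
      fderiv_sub (dU p) (dUt p)
    have hvS : ∀ p : ℝ × ℝ, fderiv ℝ S p ((1 : ℝ), (-1 : ℝ)) = 0 := by
      intro p
      have : ((1 : ℝ), (-1 : ℝ)) = ((1 : ℝ), (0 : ℝ)) - ((0 : ℝ), (1 : ℝ)) := by
        simp [Prod.ext_iff]
      rw [this, map_sub, fS]
      simp only [ContinuousLinearMap.add_apply]
      rw [h1 p, h2 p]
      ring
    have hvD : ∀ p : ℝ × ℝ, fderiv ℝ D p ((1 : ℝ), (1 : ℝ)) = 0 := by
      intro p
      have : ((1 : ℝ), (1 : ℝ)) = ((1 : ℝ), (0 : ℝ)) + ((0 : ℝ), (1 : ℝ)) := by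
        simp [Prod.ext_iff]
      rw [this, map_add, fD]
      simp only [ContinuousLinearMap.sub_apply]
      rw [h1 p, h2 p]
      ring
    refine ⟨fun t => (U (t, 0) + Ut (t, 0)) / 2, fun t => (U (t, 0) - Ut (t, 0)) / 2,
      ?_, ?_, ?_⟩
    · exact ((hU.comp (contDiff_id.prodMk contDiff_const)).add
        (hUt.comp (contDiff_id.prodMk contDiff_const))).div_const 2
    · exact ((hU.comp (contDiff_id.prodMk contDiff_const)).sub
        (hUt.comp (contDiff_id.prodMk contDiff_const))).div_const 2
    · intro q₁ q₂
      have hSc : S (q₁ + q₂, 0) = S (q₁, q₂) := by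
        have := const_dir S dS ((1 : ℝ), (-1 : ℝ)) hvS (q₁, q₂) q₂
        have heq : ((q₁, q₂) : ℝ × ℝ) + q₂ • ((1 : ℝ), (-1 : ℝ)) = (q₁ + q₂, 0) := by
          simp [Prod.ext_iff] <;> ring
        rwa [heq] at this
      have hDc : D (q₁ - q₂, 0) = D (q₁, q₂) := by
        have := const_dir D dD ((1 : ℝ), (1 : ℝ)) hvD (q₁, q₂) (-q₂)
        have heq : ((q₁, q₂) : ℝ × ℝ) + (-q₂) • ((1 : ℝ), (1 : ℝ)) = (q₁ - q₂, 0) := by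
          simp [Prod.ext_iff] <;> ring
        rwa [heq] at this
      simp only [hSdef, hDdef] at hSc hDc
      constructor <;> linarith
  · rintro ⟨f, g, hf, hg, hfg⟩ q₁ q₂
    have df : ∀ x : ℝ, HasDerivAt f (deriv f x) x := fun x =>
      (hf.differentiable (by simp) x).hasDerivAt
    have dg : ∀ x : ℝ, HasDerivAt g (deriv g x) x := fun x =>
      (hg.differentiable (by simp) x).hasDerivAt
    have e1 : deriv (fun s => U (s, q₂)) q₁ = deriv f (q₁ + q₂) + deriv g (q₁ - q₂) := by
      have h1 : HasDerivAt (fun s : ℝ => f (s + q₂)) (deriv f (q₁ + q₂)) q₁ := by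
        simpa [Function.comp_def] using (df (q₁ + q₂)).comp q₁ ((hasDerivAt_id q₁).add_const q₂)
      have h2 : HasDerivAt (fun s : ℝ => g (s - q₂)) (deriv g (q₁ - q₂)) q₁ := by
        simpa [Function.comp_def] using (dg (q₁ - q₂)).comp q₁ ((hasDerivAt_id q₁).sub_const q₂)
      have : (fun s => U (s, q₂)) = fun s => f (s + q₂) + g (s - q₂) :=
        funext fun s => (hfg s q₂).1
      rw [this]; exact (h1.add h2).deriv
    have e2 : deriv (fun s => U (q₁, s)) q₂ = deriv f (q₁ + q₂) - deriv g (q₁ - q₂) := by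
      have h1 : HasDerivAt (fun s : ℝ => f (q₁ + s)) (deriv f (q₁ + q₂)) q₂ := by
        simpa [Function.comp_def] using (df (q₁ + q₂)).comp q₂ ((hasDerivAt_id q₂).const_add q₁)
      have h2 : HasDerivAt (fun s : ℝ => g (q₁ - s)) (-deriv g (q₁ - q₂)) q₂ := by
        simpa [mul_comm, Function.comp_def] using (dg (q₁ - q₂)).comp q₂ ((hasDerivAt_id q₂).const_sub q₁)
      have : (fun s => U (q₁, s)) = fun s => f (q₁ + s) + g (q₁ - s) :=
        funext fun s => (hfg q₁ s).1
      rw [this]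
      have := (h1.add h2).deriv
      exact this.trans (by ring)
    have e3 : deriv (fun s => Ut (q₁, s)) q₂ = deriv f (q₁ + q₂) + deriv g (q₁ - q₂) := by
      have h1 : HasDerivAt (fun s : ℝ => f (q₁ + s)) (deriv f (q₁ + q₂)) q₂ := by
        simpa [Function.comp_def] using (df (q₁ + q₂)).comp q₂ ((hasDerivAt_id q₂).const_add q₁)
      have h2 : HasDerivAt (fun s : ℝ => g (q₁ - s)) (-deriv g (q₁ - q₂)) q₂ := by
        simpa [mul_comm, Function.comp_def] using (dg (q₁ - q₂)).comp q₂ ((hasDerivAt_id q₂).const_sub q₁)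
      have : (fun s => Ut (q₁, s)) = fun s => f (q₁ + s) - g (q₁ - s) :=
        funext fun s => (hfg q₁ s).2
      rw [this]
      have := (h1.sub h2).deriv
      exact this.trans (by ring)
    have e4 : deriv (fun s => Ut (s, q₂)) q₁ = deriv f (q₁ + q₂) - deriv g (q₁ - q₂) := by
      have h1 : HasDerivAt (fun s : ℝ => f (s + q₂)) (deriv f (q₁ + q₂)) q₁ := by
        simpa [Function.comp_def] using (df (q₁ + q₂)).comp q₁ ((hasDerivAt_id q₁).add_const q₂)
      have h2 : HasDerivAt (fun s : ℝ => g (s - q₂)) (deriv g (q₁ - q₂)) q₁ := by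
        simpa [Function.comp_def] using (dg (q₁ - q₂)).comp q₁ ((hasDerivAt_id q₁).sub_const q₂)
      have : (fun s => Ut (s, q₂)) = fun s => f (s + q₂) - g (s - q₂) :=
        funext fun s => (hfg s q₂).2
      rw [this]; exact (h1.sub h2).deriv
    exact ⟨by rw [e1, e3], by rw [e2, e4]⟩
end

section
/- Let U, Ũ : ℝ² → ℝ be smooth functions satisfying ∂U/∂q₁ = ∂Ũ/∂q₂ and ∂U/∂q₂ = ∂Ũ/∂q₁ identically on ℝ². Then there exist smooth functions f, g : ℝ → ℝ such that U(q₁,q₂) = f(q₁+q₂) + g(q₁−q₂) and Ũ(q₁,q₂) = f(q₁+q₂) − g(q₁−q₂) for all (q₁,q₂) ∈ ℝ². -/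
private lemma pdx (U : ℝ × ℝ → ℝ) (hd : Differentiable ℝ U) (q₁ q₂ : ℝ) :
    deriv (fun s => U (s, q₂)) q₁ = fderiv ℝ U (q₁, q₂) (1, 0) := by
  have hL : HasDerivAt (fun s : ℝ => (s, q₂)) ((1:ℝ), (0:ℝ)) q₁ :=
    (hasDerivAt_id q₁).prodMk (hasDerivAt_const q₁ q₂)
  exact ((hd (q₁, q₂)).hasFDerivAt.comp_hasDerivAt q₁ hL).deriv

private lemma pdy (U : ℝ × ℝ → ℝ) (hd : Differentiable ℝ U) (q₁ q₂ : ℝ) :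
    deriv (fun s => U (q₁, s)) q₂ = fderiv ℝ U (q₁, q₂) (0, 1) := by
  have hL : HasDerivAt (fun s : ℝ => (q₁, s)) ((0:ℝ), (1:ℝ)) q₂ :=
    (hasDerivAt_const q₂ q₁).prodMk (hasDerivAt_id q₂)
  exact ((hd (q₁, q₂)).hasFDerivAt.comp_hasDerivAt q₂ hL).deriv

/-- Forward implication of the main theorem: if `∂U/∂q₁ = ∂Ũ/∂q₂` and
`∂U/∂q₂ = ∂Ũ/∂q₁` identically on ℝ², then the potentials split as
`U = f(q₁+q₂) + g(q₁−q₂)` and `Ũ = f(q₁+q₂) − g(q₁−q₂)`. -/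
theorem stmt_1 (U Ut : ℝ × ℝ → ℝ)
    (hU : ContDiff ℝ (⊤ : ℕ∞) U) (hUt : ContDiff ℝ (⊤ : ℕ∞) Ut)
    (h1 : ∀ q₁ q₂ : ℝ,
      deriv (fun s => U (s, q₂)) q₁ = deriv (fun s => Ut (q₁, s)) q₂)
    (h2 : ∀ q₁ q₂ : ℝ,
      deriv (fun s => U (q₁, s)) q₂ = deriv (fun s => Ut (s, q₂)) q₁) :
    ∃ f g : ℝ → ℝ, ContDiff ℝ (⊤ : ℕ∞) f ∧ ContDiff ℝ (⊤ : ℕ∞) g ∧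
      ∀ q₁ q₂ : ℝ,
        U (q₁, q₂) = f (q₁ + q₂) + g (q₁ - q₂) ∧
        Ut (q₁, q₂) = f (q₁ + q₂) - g (q₁ - q₂) := by
  have hd : Differentiable ℝ U := hU.differentiable (by simp)
  have hdt : Differentiable ℝ Ut := hUt.differentiable (by simp)
  have key1 : ∀ p : ℝ × ℝ, fderiv ℝ U p (1, 0) = fderiv ℝ Ut p (0, 1) := by
    intro p
    have := h1 p.1 p.2
    rwa [pdx U hd, pdy Ut hdt] at this
  have key2 : ∀ p : ℝ × ℝ, fderiv ℝ U p (0, 1) = fderiv ℝ Ut p (1, 0) := by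
    intro p
    have := h2 p.1 p.2
    rwa [pdy U hd, pdx Ut hdt] at this
  -- derivative of U along a line t ↦ (a + t, b + c*t)
  have lineD : ∀ (V : ℝ × ℝ → ℝ), Differentiable ℝ V → ∀ (a b c s : ℝ),
      HasDerivAt (fun t => V (a + t, b + c * t))
        (fderiv ℝ V (a + s, b + c * s) (1, c)) s := by
    intro V hV a b c s
    have hL : HasDerivAt (fun t : ℝ => (a + t, b + c * t)) ((1:ℝ), c) s := by
      have h1' : HasDerivAt (fun t : ℝ => a + t) 1 s := (hasDerivAt_id s).const_add a
      have h2' : HasDerivAt (fun t : ℝ => b + c * t) c s := by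
        simpa using ((hasDerivAt_id s).const_mul c).const_add b
      exact h1'.prodMk h2'
    exact (hV (a + s, b + c * s)).hasFDerivAt.comp_hasDerivAt s hL
  -- sum is constant along direction (1, -1)
  have csum : ∀ q₁ q₂ s : ℝ,
      U (q₁ + s, q₂ + (-1) * s) + Ut (q₁ + s, q₂ + (-1) * s) = U (q₁, q₂) + Ut (q₁, q₂) := by
    intro q₁ q₂ s
    have hconst := is_const_of_deriv_eq_zero (f := fun t => U (q₁ + t, q₂ + (-1) * t) + Ut (q₁ + t, q₂ + (-1) * t))
      (fun t => ((lineD U hd q₁ q₂ (-1) t).add (lineD Ut hdt q₁ q₂ (-1) t)).differentiableAt)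
      (fun t => by
        have h := ((lineD U hd q₁ q₂ (-1) t).add (lineD Ut hdt q₁ q₂ (-1) t)).deriv
        refine h.trans ?_
        set p := (q₁ + t, q₂ + (-1) * t)
        have e1 : ((1 : ℝ), (-1 : ℝ)) = ((1:ℝ), (0:ℝ)) - ((0:ℝ), (1:ℝ)) := by norm_num
        rw [e1, map_sub, map_sub, key1 p, key2 p]
        ring) s 0
    simpa using hconst
  -- difference is constant along direction (1, 1)
  have cdiff : ∀ q₁ q₂ s : ℝ,
      U (q₁ + s, q₂ + 1 * s) - Ut (q₁ + s, q₂ + 1 * s) = U (q₁, q₂) - Ut (q₁, q₂) := by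
    intro q₁ q₂ s
    have hconst := is_const_of_deriv_eq_zero (f := fun t => U (q₁ + t, q₂ + 1 * t) - Ut (q₁ + t, q₂ + 1 * t))
      (fun t => ((lineD U hd q₁ q₂ 1 t).sub (lineD Ut hdt q₁ q₂ 1 t)).differentiableAt)
      (fun t => by
        have h := ((lineD U hd q₁ q₂ 1 t).sub (lineD Ut hdt q₁ q₂ 1 t)).deriv
        refine h.trans ?_
        set p := (q₁ + t, q₂ + 1 * t)
        have e1 : ((1 : ℝ), (1 : ℝ)) = ((1:ℝ), (0:ℝ)) + ((0:ℝ), (1:ℝ)) := by norm_num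
        rw [e1, map_add, map_add, key1 p, key2 p]
        ring) s 0
    simpa using hconst
  refine ⟨fun t => (U (t, 0) + Ut (t, 0)) / 2, fun t => (U (t, 0) - Ut (t, 0)) / 2, ?_, ?_, ?_⟩
  · have hc : ContDiff ℝ (⊤ : ℕ∞) (fun t : ℝ => (t, (0:ℝ))) := contDiff_id.prodMk contDiff_const
    exact ((hU.comp hc).add (hUt.comp hc)).div_const 2
  · have hc : ContDiff ℝ (⊤ : ℕ∞) (fun t : ℝ => (t, (0:ℝ))) := contDiff_id.prodMk contDiff_const
    exact ((hU.comp hc).sub (hUt.comp hc)).div_const 2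
  · intro q₁ q₂
    have hs := csum q₁ q₂ q₂
    have hd' := cdiff q₁ q₂ (-q₂)
    have es : U (q₁ + q₂, 0) + Ut (q₁ + q₂, 0) = U (q₁, q₂) + Ut (q₁, q₂) := by
      simpa using hs
    have ed : U (q₁ - q₂, 0) - Ut (q₁ - q₂, 0) = U (q₁, q₂) - Ut (q₁, q₂) := by
      have : q₁ + -q₂ = q₁ - q₂ := by ring
      simpa [this] using hd'
    constructor <;> linarith
end

section
/- Let f, g : ℝ → ℝ be smooth, let U(q₁,q₂) = f(q₁+q₂) + g(q₁−q₂) and Ũ(q₁,q₂) = f(q₁+q₂) − g(q₁−q₂), and let q = (q₁,q₂) : ℝ → ℝ² be a twice differentiable curve satisfying q̈₁(t) = −∂U/∂q₁(q₁(t),q₂(t)) and q̈₂(t) = −∂U/∂q₂(q₁(t),q₂(t)) for all t. Then Ẽ(t) = q̇₁(t)q̇₂(t) + Ũ(q₁(t),q₂(t)) is constant in t. -/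
/-- Conservation of the second energy `Ẽ = q̇₁q̇₂ + Ũ(q₁,q₂)` along solutions of
`q̈ᵢ = −∂U/∂qᵢ`, where `U = f(q₁+q₂) + g(q₁−q₂)` and `Ũ = f(q₁+q₂) − g(q₁−q₂)`. -/
theorem stmt_5 (f g : ℝ → ℝ) (hf : ContDiff ℝ (⊤ : ℕ∞) f) (hg : ContDiff ℝ (⊤ : ℕ∞) g)
    (U Ut : ℝ × ℝ → ℝ)
    (hU : ∀ a b : ℝ, U (a, b) = f (a + b) + g (a - b))
    (hUt : ∀ a b : ℝ, Ut (a, b) = f (a + b) - g (a - b))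
    (q₁ q₂ : ℝ → ℝ)
    (hq₁ : Differentiable ℝ q₁) (hq₁' : Differentiable ℝ (deriv q₁))
    (hq₂ : Differentiable ℝ q₂) (hq₂' : Differentiable ℝ (deriv q₂))
    (heq₁ : ∀ t : ℝ, deriv (deriv q₁) t = -deriv (fun s => U (s, q₂ t)) (q₁ t))
    (heq₂ : ∀ t : ℝ, deriv (deriv q₂) t = -deriv (fun s => U (q₁ t, s)) (q₂ t)) :
    ∃ c : ℝ, ∀ t : ℝ,
      deriv q₁ t * deriv q₂ t + Ut (q₁ t, q₂ t) = c := by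
  have hfd : Differentiable ℝ f := hf.differentiable (by simp)
  have hgd : Differentiable ℝ g := hg.differentiable (by simp)
  set E : ℝ → ℝ := fun t => deriv q₁ t * deriv q₂ t + Ut (q₁ t, q₂ t) with hE
  have hEeq : E = fun t => deriv q₁ t * deriv q₂ t +
      (f (q₁ t + q₂ t) - g (q₁ t - q₂ t)) := by
    funext t; simp [hE, hUt]
  -- partial derivatives of U
  have hpar₁ : ∀ a b : ℝ,
      deriv (fun s => U (s, b)) a = deriv f (a + b) + deriv g (a - b) := by
    intro a b
    have h1 : (fun s => U (s, b)) = fun s => f (s + b) + g (s - b) := by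
      funext s; exact hU s b
    rw [h1]
    have hF : HasDerivAt (fun s => f (s + b)) (deriv f (a + b)) a := by
      have := ((hfd (a + b)).hasDerivAt).comp a
        ((hasDerivAt_id a).add_const b)
      simpa [Function.comp_def] using this
    have hG : HasDerivAt (fun s => g (s - b)) (deriv g (a - b)) a := by
      have := ((hgd (a - b)).hasDerivAt).comp a
        ((hasDerivAt_id a).sub_const b)
      simpa [Function.comp_def] using this
    exact (hF.add hG).deriv
  have hpar₂ : ∀ a b : ℝ,
      deriv (fun s => U (a, s)) b = deriv f (a + b) - deriv g (a - b) := by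
    intro a b
    have h1 : (fun s => U (a, s)) = fun s => f (a + s) + g (a - s) := by
      funext s; exact hU a s
    rw [h1]
    have hF : HasDerivAt (fun s => f (a + s)) (deriv f (a + b)) b := by
      have := ((hfd (a + b)).hasDerivAt).comp b
        ((hasDerivAt_id b).const_add a)
      simpa [Function.comp_def] using this
    have hG : HasDerivAt (fun s => g (a - s)) (-deriv g (a - b)) b := by
      have := ((hgd (a - b)).hasDerivAt).comp b
        ((hasDerivAt_id b).const_sub a)
      simpa [Function.comp_def] using this
    have := (hF.add hG).deriv
    simpa [sub_eq_add_neg, Pi.add_def] using this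
  have hderiv : ∀ t : ℝ, HasDerivAt E 0 t := by
    intro t
    have hd₁ : HasDerivAt q₁ (deriv q₁ t) t := (hq₁ t).hasDerivAt
    have hd₂ : HasDerivAt q₂ (deriv q₂ t) t := (hq₂ t).hasDerivAt
    have hdd₁ : HasDerivAt (deriv q₁) (deriv (deriv q₁) t) t := (hq₁' t).hasDerivAt
    have hdd₂ : HasDerivAt (deriv q₂) (deriv (deriv q₂) t) t := (hq₂' t).hasDerivAt
    have hF : HasDerivAt (fun t => f (q₁ t + q₂ t))
        (deriv f (q₁ t + q₂ t) * (deriv q₁ t + deriv q₂ t)) t :=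
      ((hfd (q₁ t + q₂ t)).hasDerivAt).comp t (hd₁.add hd₂)
    have hG : HasDerivAt (fun t => g (q₁ t - q₂ t))
        (deriv g (q₁ t - q₂ t) * (deriv q₁ t - deriv q₂ t)) t :=
      ((hgd (q₁ t - q₂ t)).hasDerivAt).comp t (hd₁.sub hd₂)
    have hEt : HasDerivAt E
        (deriv (deriv q₁) t * deriv q₂ t + deriv q₁ t * deriv (deriv q₂) t +
          (deriv f (q₁ t + q₂ t) * (deriv q₁ t + deriv q₂ t) -
            deriv g (q₁ t - q₂ t) * (deriv q₁ t - deriv q₂ t))) t := by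
      rw [hEeq]
      exact (hdd₁.mul hdd₂).add (hF.sub hG)
    have hz : deriv (deriv q₁) t * deriv q₂ t + deriv q₁ t * deriv (deriv q₂) t +
          (deriv f (q₁ t + q₂ t) * (deriv q₁ t + deriv q₂ t) -
            deriv g (q₁ t - q₂ t) * (deriv q₁ t - deriv q₂ t)) = 0 := by
      rw [heq₁ t, heq₂ t, hpar₁ (q₁ t) (q₂ t), hpar₂ (q₁ t) (q₂ t)]
      ring
    rwa [hz] at hEt
  have hconst : ∀ x y : ℝ, E x = E y :=
    is_const_of_deriv_eq_zero (fun t => (hderiv t).differentiableAt)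
      (fun t => (hderiv t).deriv)
  exact ⟨E 0, fun t => hconst t 0⟩
end

section
/- Let q = (q₁,q₂) : ℝ → ℝ² be a twice differentiable curve satisfying the Sawada–Kotera equations q̈₁(t) = −q₁(t)(1 + 2q₂(t)) and q̈₂(t) = −q₂(t) − q₁(t)² − q₂(t)² for all t. Then K(t) = q̇₁(t)q̇₂(t) + q₁(t)q₂(t) + ⅓q₁(t)³ + q₁(t)q₂(t)² is constant in t. -/
/-! The time derivative of `K` along any curve is `q̇₁ (q̈₂ + ∂V/∂q₂) + q̇₂ (q̈₁ + ∂V/∂q₁)`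
with `V = ½(q₁² + q₂²) + q₁²q₂ + ⅓q₂³` the potential, and both brackets vanish on solutions. -/

noncomputable def sawadaKoteraIntegral (q₁ q₂ p₁ p₂ : ℝ) : ℝ :=
  p₁ * p₂ + q₁ * q₂ + (1 / 3) * q₁ ^ 3 + q₁ * q₂ ^ 2

theorem hasDerivAt_sawadaKoteraIntegral {q₁ q₂ p₁ p₂ : ℝ → ℝ} {v₁ v₂ a₁ a₂ t : ℝ}
    (h₁ : HasDerivAt q₁ v₁ t) (h₂ : HasDerivAt q₂ v₂ t)
    (hp₁ : HasDerivAt p₁ a₁ t) (hp₂ : HasDerivAt p₂ a₂ t) :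
    HasDerivAt (fun s => sawadaKoteraIntegral (q₁ s) (q₂ s) (p₁ s) (p₂ s))
      (a₁ * p₂ t + p₁ t * a₂ + v₁ * (q₂ t + q₁ t ^ 2 + q₂ t ^ 2)
        + v₂ * q₁ t * (1 + 2 * q₂ t)) t := by
  have h := (((hp₁.mul hp₂).add (h₁.mul h₂)).add ((h₁.pow 3).const_mul (1 / 3 : ℝ))).add
    (h₁.mul (h₂.pow 2))
  refine h.congr_deriv ?_
  simp only [Pi.pow_apply, Nat.cast_ofNat]
  ring

theorem hasDerivAt_sawadaKoteraIntegral_of_solution {q₁ q₂ p₁ p₂ : ℝ → ℝ}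
    (hq₁ : Differentiable ℝ q₁) (hq₂ : Differentiable ℝ q₂)
    (hp₁ : Differentiable ℝ p₁) (hp₂ : Differentiable ℝ p₂)
    (hv₁ : deriv q₁ = p₁) (hv₂ : deriv q₂ = p₂)
    (heq₁ : ∀ t, deriv p₁ t = -q₁ t * (1 + 2 * q₂ t))
    (heq₂ : ∀ t, deriv p₂ t = -q₂ t - q₁ t ^ 2 - q₂ t ^ 2) (t : ℝ) :
    HasDerivAt (fun s => sawadaKoteraIntegral (q₁ s) (q₂ s) (p₁ s) (p₂ s)) 0 t := by
  have h := hasDerivAt_sawadaKoteraIntegral (hq₁ t).hasDerivAt (hq₂ t).hasDerivAt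
    (hp₁ t).hasDerivAt (hp₂ t).hasDerivAt
  rw [hv₁, hv₂, heq₁, heq₂] at h
  convert h using 1
  ring

/-- Along solutions of the Sawada–Kotera equations, the quantity
`K = q̇₁q̇₂ + q₁q₂ + ⅓q₁³ + q₁q₂²` is a first integral. -/
theorem stmt_7 (q₁ q₂ : ℝ → ℝ)
    (hq₁ : Differentiable ℝ q₁) (hq₁' : Differentiable ℝ (deriv q₁))
    (hq₂ : Differentiable ℝ q₂) (hq₂' : Differentiable ℝ (deriv q₂))
    (heq₁ : ∀ t : ℝ, deriv (deriv q₁) t = -q₁ t * (1 + 2 * q₂ t))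
    (heq₂ : ∀ t : ℝ, deriv (deriv q₂) t = -q₂ t - (q₁ t) ^ 2 - (q₂ t) ^ 2) :
    ∃ c : ℝ, ∀ t : ℝ,
      deriv q₁ t * deriv q₂ t + q₁ t * q₂ t + (1 / 3) * (q₁ t) ^ 3
        + q₁ t * (q₂ t) ^ 2 = c := by
  have hK := hasDerivAt_sawadaKoteraIntegral_of_solution hq₁ hq₂ hq₁' hq₂' rfl rfl heq₁ heq₂
  exact ⟨_, fun t => is_const_of_deriv_eq_zero (fun s => (hK s).differentiableAt)
    (fun s => (hK s).deriv) t 0⟩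
end

section
/- Define U(q₁,q₂) = ½(q₁² + q₂²) + q₁²q₂ + ⅓q₂³ and Ũ(q₁,q₂) = q₁q₂ + ⅓q₁³ + q₁q₂², and the Lagrangians L(t,q,v) = ½(v₁² + v₂²) − U(q₁,q₂) and L̃(t,q,v) = v₁v₂ − Ũ(q₁,q₂). Then there exists no differentiable function G : ℝ × ℝ² → ℝ such that L̃(t,q,v) = L(t,q,v) + ∂G/∂t(t,q) + ∂G/∂q₁(t,q)·v₁ + ∂G/∂q₂(t,q)·v₂ for all (t,q,v) ∈ ℝ × ℝ² × ℝ². -/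
/-! A gauge term `∂G/∂t + ∇_q G · v` is affine in the velocity, whereas `L̃ - L` restricted to
`t = 0`, `q = 0`, `v₂ = 0` is `-v₁² / 2`; an affine function cannot agree with a genuinely
quadratic one, as comparing the values at `v₁ = -1, 0, 1` already shows. -/

theorem not_forall_mul_sq_eq_affine {a b c : ℝ} (ha : a ≠ 0) :
    ¬ ∀ v : ℝ, a * v ^ 2 = b + c * v := by
  intro h
  have h₀ := h 0
  have h₁ := h 1
  have h₂ := h (-1)
  norm_num at h₀ h₁ h₂
  exact ha (by linarith)

/-- The Sawada–Kotera Lagrangian `L(t,q,v) = ½(v₁²+v₂²) − U(q)` and the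
alternative Lagrangian `L̃(t,q,v) = v₁v₂ − Ũ(q)` are not related by a gauge
transform: there is no differentiable `G(t,q)` with
`L̃ = L + ∂G/∂t + ∂G/∂q₁·v₁ + ∂G/∂q₂·v₂`. -/
theorem stmt_12 :
    ¬ ∃ G : ℝ × (ℝ × ℝ) → ℝ, Differentiable ℝ G ∧
      ∀ t q₁ q₂ v₁ v₂ : ℝ,
        v₁ * v₂ - (q₁ * q₂ + (1 / 3) * q₁ ^ 3 + q₁ * q₂ ^ 2)
          = ((1 / 2) * (v₁ ^ 2 + v₂ ^ 2)
              - ((1 / 2) * (q₁ ^ 2 + q₂ ^ 2) + q₁ ^ 2 * q₂ + (1 / 3) * q₂ ^ 3))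
            + deriv (fun s => G (s, (q₁, q₂))) t
            + deriv (fun s => G (t, (s, q₂))) q₁ * v₁
            + deriv (fun s => G (t, (q₁, s))) q₂ * v₂ := by
  rintro ⟨G, -, hgauge⟩
  refine not_forall_mul_sq_eq_affine (a := -(1 / 2)) (b := deriv (fun s => G (s, (0, 0))) 0)
    (c := deriv (fun s => G (0, (s, 0))) 0) (by norm_num) fun v => ?_
  have h := hgauge 0 0 0 v 0
  norm_num at h
  linarith
end

section
/- Let α_f, α_g ∈ ℝ and let q = (q₁,q₂) : ℝ → ℝ² be a twice differentiable curve with q₂(t) + q₁(t) ≠ 0 and q₂(t) − q₁(t) ≠ 0 for all t, satisfying q̈₁(t) = 2α_f/(q₂(t)+q₁(t))³ − 2α_g/(q₂(t)−q₁(t))³ and q̈₂(t) = 2α_f/(q₂(t)+q₁(t))³ + 2α_g/(q₂(t)−q₁(t))³ for all t. Then Ẽ(t) = q̇₁(t)q̇₂(t) + α_f/(q₁(t)+q₂(t))² − α_g/(q₁(t)−q₂(t))² is constant in t. -/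
/-! In light-cone coordinates the system is the Euler–Lagrange system of
`L̃ = q̇₁ q̇₂ - Ũ` with `Ũ(q₁, q₂) = f(q₁ + q₂) - g(q₁ - q₂)`, whose equations read
`q̈₁ = -∂₂Ũ`, `q̈₂ = -∂₁Ũ`. Differentiating `Ẽ = q̇₁ q̇₂ + Ũ` along a solution, the terms
`q̈₁ q̇₂ + q̇₁ q̈₂` cancel `∂₁Ũ q̇₁ + ∂₂Ũ q̇₂`, so `Ẽ` has zero derivative. For the Calogero
potential, `f = α_f / x²` and `g = α_g / y²`. -/

theorem hasDerivAt_div_sq (α x : ℝ) (hx : x ≠ 0) :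
    HasDerivAt (fun x => α / x ^ 2) (-2 * α / x ^ 3) x := by
  refine ((hasDerivAt_const x α).div (hasDerivAt_pow 2 x) (pow_ne_zero 2 hx)).congr_deriv ?_
  field_simp
  ring

section LightCone

variable {f g f' g' q₁ q₂ v₁ v₂ a₁ a₂ : ℝ → ℝ} {t : ℝ}

theorem hasDerivAt_lightConeEnergy (hq₁ : HasDerivAt q₁ (v₁ t) t) (hq₂ : HasDerivAt q₂ (v₂ t) t)
    (hv₁ : HasDerivAt v₁ (a₁ t) t) (hv₂ : HasDerivAt v₂ (a₂ t) t)
    (hf : HasDerivAt f (f' (q₁ t + q₂ t)) (q₁ t + q₂ t))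
    (hg : HasDerivAt g (g' (q₁ t - q₂ t)) (q₁ t - q₂ t)) :
    HasDerivAt (fun t => v₁ t * v₂ t + f (q₁ t + q₂ t) - g (q₁ t - q₂ t))
      (a₁ t * v₂ t + v₁ t * a₂ t + f' (q₁ t + q₂ t) * (v₁ t + v₂ t)
        - g' (q₁ t - q₂ t) * (v₁ t - v₂ t)) t :=
  ((hv₁.mul hv₂).add (hf.comp t (hq₁.add hq₂))).sub (hg.comp t (hq₁.sub hq₂))

theorem exists_lightConeEnergy_eq_const (hq₁ : Differentiable ℝ q₁)
    (hq₁' : Differentiable ℝ (deriv q₁)) (hq₂ : Differentiable ℝ q₂)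
    (hq₂' : Differentiable ℝ (deriv q₂))
    (hf : ∀ t, HasDerivAt f (f' (q₁ t + q₂ t)) (q₁ t + q₂ t))
    (hg : ∀ t, HasDerivAt g (g' (q₁ t - q₂ t)) (q₁ t - q₂ t))
    (heq₁ : ∀ t, deriv (deriv q₁) t = -f' (q₁ t + q₂ t) - g' (q₁ t - q₂ t))
    (heq₂ : ∀ t, deriv (deriv q₂) t = -f' (q₁ t + q₂ t) + g' (q₁ t - q₂ t)) :
    ∃ c : ℝ, ∀ t, deriv q₁ t * deriv q₂ t + f (q₁ t + q₂ t) - g (q₁ t - q₂ t) = c := by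
  have hE : ∀ t, HasDerivAt
      (fun t => deriv q₁ t * deriv q₂ t + f (q₁ t + q₂ t) - g (q₁ t - q₂ t)) 0 t := by
    intro t
    convert hasDerivAt_lightConeEnergy (hq₁ t).hasDerivAt (hq₂ t).hasDerivAt
      (hq₁' t).hasDerivAt (hq₂' t).hasDerivAt (hf t) (hg t) using 1
    rw [heq₁, heq₂]
    ring
  exact ⟨_, fun t => is_const_of_deriv_eq_zero (fun t => (hE t).differentiableAt)
    (fun t => (hE t).deriv) t 0⟩

end LightCone

/-- For the Calogero-type system with potential
`α_f/(q₂+q₁)² + α_g/(q₂−q₁)²`, the quantity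
`Ẽ = q̇₁q̇₂ + α_f/(q₁+q₂)² − α_g/(q₁−q₂)²` is a first integral. -/
theorem stmt_14 (αf αg : ℝ) (q₁ q₂ : ℝ → ℝ)
    (hq₁ : Differentiable ℝ q₁) (hq₁' : Differentiable ℝ (deriv q₁))
    (hq₂ : Differentiable ℝ q₂) (hq₂' : Differentiable ℝ (deriv q₂))
    (hne₁ : ∀ t : ℝ, q₂ t + q₁ t ≠ 0) (hne₂ : ∀ t : ℝ, q₂ t - q₁ t ≠ 0)
    (heq₁ : ∀ t : ℝ, deriv (deriv q₁) t
      = 2 * αf / (q₂ t + q₁ t) ^ 3 - 2 * αg / (q₂ t - q₁ t) ^ 3)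
    (heq₂ : ∀ t : ℝ, deriv (deriv q₂) t
      = 2 * αf / (q₂ t + q₁ t) ^ 3 + 2 * αg / (q₂ t - q₁ t) ^ 3) :
    ∃ c : ℝ, ∀ t : ℝ,
      deriv q₁ t * deriv q₂ t + αf / (q₁ t + q₂ t) ^ 2
        - αg / (q₁ t - q₂ t) ^ 2 = c := by
  have hsum (t : ℝ) : q₁ t + q₂ t ≠ 0 := by rw [add_comm]; exact hne₁ t
  have hdiff (t : ℝ) : q₁ t - q₂ t ≠ 0 := sub_ne_zero.mpr (sub_ne_zero.mp (hne₂ t)).symm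
  have hcube (t : ℝ) : (q₂ t - q₁ t) ^ 3 = -(q₁ t - q₂ t) ^ 3 := by ring
  refine exists_lightConeEnergy_eq_const (f' := fun x => -2 * αf / x ^ 3)
    (g' := fun y => -2 * αg / y ^ 3) hq₁ hq₁' hq₂ hq₂'
    (fun t => hasDerivAt_div_sq αf _ (hsum t)) (fun t => hasDerivAt_div_sq αg _ (hdiff t))
    (fun t => ?_) (fun t => ?_)
  · rw [heq₁ t, add_comm (q₂ t), hcube, div_neg]
    ring
  · rw [heq₂ t, add_comm (q₂ t), hcube, div_neg]
    ring
end

section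
/- Let α ∈ ℝ and let x : ℝ → ℝ be a twice differentiable function with x(t) ≠ 0 for all t, satisfying ẍ(t) = 4α/x(t)³ for all t. Then the second derivative of t ↦ x(t)² is constant, equal to 8E₁ where E₁ = ¼ẋ(t)² + α/x(t)² (which is itself constant in t); consequently t ↦ x(t)² is a polynomial in t of degree at most 2. -/
/-! The separated equation `ẍ = 4α/x³` is Newton's equation `ẍ = -V'(x)` for `V(y) = 2α/y²`,
so `½ẋ² + 2α/x² = 2E₁` is conserved. Then `(x²)'' = 2ẋ² + 2xẍ = 2ẋ² + 8α/x² = 8E₁`, and a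
function with constant second derivative is a quadratic polynomial. -/

theorem eq_of_forall_hasDerivAt_zero {𝕜 G : Type*} [RCLike 𝕜] [NormedAddCommGroup G]
    [NormedSpace 𝕜 G] {f : 𝕜 → G} (hf : ∀ t, HasDerivAt f 0 t) (s t : 𝕜) : f s = f t :=
  is_const_of_deriv_eq_zero (fun t => (hf t).differentiableAt) (fun t => (hf t).deriv) s t

theorem eq_quadratic_of_hasDerivAt_of_hasDerivAt_const {f f' : ℝ → ℝ} {c : ℝ}
    (hf : ∀ t, HasDerivAt f (f' t) t) (hf' : ∀ t, HasDerivAt f' c t) (t : ℝ) :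
    f t = c / 2 * t ^ 2 + f' 0 * t + f 0 := by
  have hvel (t : ℝ) : f' t = c * t + f' 0 := by
    have h (s : ℝ) : HasDerivAt (fun s => f' s - c * s) 0 s :=
      ((hf' s).fun_sub ((hasDerivAt_id s).const_mul c)).congr_deriv (by simp)
    linarith [eq_of_forall_hasDerivAt_zero h t 0]
  have h (s : ℝ) : HasDerivAt (fun s => f s - (c / 2 * s ^ 2 + f' 0 * s)) 0 s :=
    ((hf s).fun_sub ((((hasDerivAt_id s).fun_pow 2).const_mul (c / 2)).fun_add
      ((hasDerivAt_id s).const_mul (f' 0)))).congr_deriv (by simp [hvel s]; ring)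
  linarith [eq_of_forall_hasDerivAt_zero h t 0]

theorem energy_eq_of_hasDerivAt {x v F V : ℝ → ℝ}
    (hx : ∀ t, HasDerivAt x (v t) t) (hv : ∀ t, HasDerivAt v (F (x t)) t)
    (hV : ∀ t, HasDerivAt V (-F (x t)) (x t)) (t : ℝ) :
    v t ^ 2 / 2 + V (x t) = v 0 ^ 2 / 2 + V (x 0) := by
  have h (s : ℝ) : HasDerivAt (fun s => v s ^ 2 / 2 + V (x s)) 0 s :=
    ((((hv s).fun_pow 2).div_const 2).fun_add ((hV s).comp s (hx s))).congr_deriv (by simp; ring)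
  exact eq_of_forall_hasDerivAt_zero h t 0

theorem hasDerivAt_const_div_sq (a : ℝ) {y : ℝ} (hy : y ≠ 0) :
    HasDerivAt (fun y => a / y ^ 2) (-(2 * a / y ^ 3)) y :=
  ((hasDerivAt_const y a).fun_div ((hasDerivAt_id y).fun_pow 2) (pow_ne_zero 2 hy)).congr_deriv
    (by simp; field_simp)

/-- For the separated Calogero equation `ẍ = 4α/x³` (with `x` never zero), the
energy `E₁ = ¼ẋ² + α/x²` is constant, the second derivative of `t ↦ x(t)²`
is the constant `8E₁`, and consequently `t ↦ x(t)²` is a polynomial in `t` of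
degree at most 2. -/
theorem stmt_15 (α : ℝ) (x : ℝ → ℝ)
    (hx : Differentiable ℝ x) (hx' : Differentiable ℝ (deriv x))
    (hne : ∀ t : ℝ, x t ≠ 0)
    (heq : ∀ t : ℝ, deriv (deriv x) t = 4 * α / (x t) ^ 3) :
    ∃ E₁ : ℝ,
      (∀ t : ℝ, (1 / 4) * (deriv x t) ^ 2 + α / (x t) ^ 2 = E₁) ∧
      (∀ t : ℝ, deriv (deriv (fun s => (x s) ^ 2)) t = 8 * E₁) ∧
      (∃ a b c : ℝ, ∀ t : ℝ, (x t) ^ 2 = a * t ^ 2 + b * t + c) := by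
  have hxd (t : ℝ) : HasDerivAt x (deriv x t) t := (hx t).hasDerivAt
  have hxdd (t : ℝ) : HasDerivAt (deriv x) (4 * α / x t ^ 3) t := heq t ▸ (hx' t).hasDerivAt
  set E₁ := (1 / 4) * deriv x 0 ^ 2 + α / x 0 ^ 2
  have henergy (t : ℝ) : (1 / 4) * deriv x t ^ 2 + α / x t ^ 2 = E₁ := by
    have := energy_eq_of_hasDerivAt (F := fun y => 4 * α / y ^ 3) hxd hxdd
      (fun t => (hasDerivAt_const_div_sq (2 * α) (hne t)).congr_deriv (by ring)) t
    rw [mul_div_assoc, mul_div_assoc] at this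
    simp only [E₁]
    linarith
  have hsq (t : ℝ) : HasDerivAt (fun s => x s ^ 2) (2 * x t * deriv x t) t :=
    ((hxd t).fun_pow 2).congr_deriv (by simp)
  have hsq_deriv (t : ℝ) : HasDerivAt (fun s => 2 * x s * deriv x s) (8 * E₁) t :=
    (((hxd t).const_mul 2).fun_mul (hxdd t)).congr_deriv (by
      rw [← henergy t]
      field_simp [hne t]
      ring)
  have hderiv : deriv (fun s => x s ^ 2) = fun t => 2 * x t * deriv x t :=
    funext fun t => (hsq t).deriv
  exact ⟨E₁, henergy, fun t => hderiv ▸ (hsq_deriv t).deriv, _, _, _,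
    eq_quadratic_of_hasDerivAt_of_hasDerivAt_const hsq hsq_deriv⟩
end
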